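/- arXiv:1608.08834 — 6 statements merged into one kernel-verified Lean document; each statement's English description precedes it below -/
import Mathlib

section
/- For the family of symmetric groups (Σ_p) with multiplication given by block sum of permutations, the splitting poset SP_n is isomorphic as a poset to the poset of nonempty proper subsets of {1,...,n} ordered by inclusion, via g(Σ_p × Σ_{n-p}) ↦ {g(1),...,g(p)}. -/
/-!
A coset `g (Σ_p × Σ_{n-p})` is determined by the set `g {1, …, p}`, because `Σ_p × Σ_{n-p}` is
exactly the stabiliser of the block `{1, …, p}`; the set has `p` elements, so `p` is recovered
from it too. A common representative `k` of two cosets with `p ≤ q` gives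
`k {1, …, p} ⊆ k {1, …, q}`. Conversely, for `S ⊆ T` a common representative is obtained by
sending `{1, …, p}` onto `S`, `{p + 1, …, q}` onto `T \ S` and the rest onto the complement of `T`.
-/

def blockSub (n p : ℕ) : Subgroup (Equiv.Perm (Fin n)) where
  carrier := {g | ∀ i : Fin n, (i : ℕ) < p ↔ ((g i : ℕ) < p)}
  one_mem' := by intro i; simp
  mul_mem' := by
    intro a b ha hb i
    exact (hb i).trans (ha (b i))
  inv_mem' := by
    intro a ha i
    simpa using (ha (a⁻¹ i)).symm

-- `Fin n` is `0`-based: the block `{1, …, p}` of the paper is `{i | i < p}` here.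
def firstBlockImage (n p : ℕ) (g : Equiv.Perm (Fin n)) : Finset (Fin n) :=
  (Finset.univ.filter fun i : Fin n => (i : ℕ) < p).image g

def spLePerm (n p q : ℕ) (g h : Equiv.Perm (Fin n)) : Prop :=
  p ≤ q ∧ ∃ k, g⁻¹ * k ∈ blockSub n p ∧ h⁻¹ * k ∈ blockSub n q

theorem Fintype.card_subtype_not_congr {α β : Type*} [Fintype α] [Fintype β] {P : α → Prop}
    {Q : β → Prop} [DecidablePred P] [DecidablePred Q] (h : Fintype.card α = Fintype.card β)
    (hP : Fintype.card {x // P x} = Fintype.card {y // Q y}) :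
    Fintype.card {x // ¬P x} = Fintype.card {y // ¬Q y} := by
  rw [Fintype.card_subtype_compl, Fintype.card_subtype_compl, h, hP]

namespace Equiv

variable {α β : Type*} {P P' : α → Prop} {Q Q' : β → Prop}
  [DecidablePred P] [DecidablePred Q] [DecidablePred P'] [DecidablePred Q']

theorem exists_forall_iff_and_extends (e₁ : {x // P x} ≃ {y // Q y})
    (e₂ : {x // ¬P x} ≃ {y // ¬Q y}) :
    ∃ e : α ≃ β, (∀ x, P x ↔ Q (e x)) ∧ ∀ x : {x // P x}, e x = e₁ x := by
  refine ⟨(sumCompl P).symm.trans ((e₁.sumCongr e₂).trans (sumCompl Q)), fun x => ?_,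
    fun x => by simp⟩
  by_cases hx : P x
  · simpa [hx] using (e₁ ⟨x, hx⟩).2
  · simpa [hx] using (e₂ ⟨x, hx⟩).2

variable [Fintype α] [Fintype β]

theorem exists_forall_iff_of_card_eq (h : Fintype.card α = Fintype.card β)
    (hP : Fintype.card {x // P x} = Fintype.card {y // Q y}) :
    ∃ e : α ≃ β, ∀ x, P x ↔ Q (e x) :=
  (exists_forall_iff_and_extends (Fintype.equivOfCardEq hP)
    (Fintype.equivOfCardEq (Fintype.card_subtype_not_congr h hP))).imp fun _ he => he.1

theorem exists_forall_iff_and_iff_of_card_eq (hP : ∀ x, P x → P' x) (hQ : ∀ y, Q y → Q' y)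
    (h : Fintype.card α = Fintype.card β)
    (hcP : Fintype.card {x // P x} = Fintype.card {y // Q y})
    (hcP' : Fintype.card {x // P' x} = Fintype.card {y // Q' y}) :
    ∃ e : α ≃ β, ∀ x, (P x ↔ Q (e x)) ∧ (P' x ↔ Q' (e x)) := by
  obtain ⟨e₁, he₁⟩ := exists_forall_iff_of_card_eq (P := fun x : {x // P' x} => P x)
    (Q := fun y : {y // Q' y} => Q y) hcP' (by
      rwa [Fintype.card_congr (subtypeSubtypeEquivSubtype (hP _)),
        Fintype.card_congr (subtypeSubtypeEquivSubtype (hQ _))])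
  obtain ⟨e, he, hext⟩ := exists_forall_iff_and_extends e₁
    (Fintype.equivOfCardEq (Fintype.card_subtype_not_congr h hcP'))
  refine ⟨e, fun x => ⟨?_, he x⟩⟩
  by_cases hx : P' x
  · rw [show e x = e₁ ⟨x, hx⟩ from hext ⟨x, hx⟩]
    exact he₁ ⟨x, hx⟩
  · exact iff_of_false (fun h => hx (hP x h)) fun h => (he x).not.mp hx (hQ _ h)

end Equiv

section

variable {n p q : ℕ}

theorem mem_blockSub {g : Equiv.Perm (Fin n)} :
    g ∈ blockSub n p ↔ ∀ i : Fin n, (i : ℕ) < p ↔ ((g i : ℕ) < p) :=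
  Iff.rfl

@[simp]
theorem mem_firstBlockImage {g : Equiv.Perm (Fin n)} {x : Fin n} :
    x ∈ firstBlockImage n p g ↔ ((g⁻¹ x : Fin n) : ℕ) < p := by
  simp only [firstBlockImage, Finset.mem_image, Finset.mem_filter, Finset.mem_univ, true_and]
  exact ⟨fun ⟨i, hi, hx⟩ => by simpa [← hx] using hi, fun hx => ⟨g⁻¹ x, hx, by simp⟩⟩

theorem firstBlockImage_eq_iff {g : Equiv.Perm (Fin n)} {S : Finset (Fin n)} :
    firstBlockImage n p g = S ↔ ∀ i : Fin n, (i : ℕ) < p ↔ g i ∈ S := by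
  rw [Finset.ext_iff, ← g.forall_congr_right]
  simp

theorem card_firstBlockImage (g : Equiv.Perm (Fin n)) (hp : p ≤ n) :
    (firstBlockImage n p g).card = p := by
  rw [firstBlockImage, Finset.card_image_of_injective _ g.injective, Fin.card_filter_val_lt,
    min_eq_right hp]

theorem firstBlockImage_mono (g : Equiv.Perm (Fin n)) (hpq : p ≤ q) :
    firstBlockImage n p g ⊆ firstBlockImage n q g := fun x hx => by
  simp only [mem_firstBlockImage] at hx ⊢
  omega

theorem inv_mul_mem_blockSub_iff {g k : Equiv.Perm (Fin n)} :
    g⁻¹ * k ∈ blockSub n p ↔ firstBlockImage n p g = firstBlockImage n p k := by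
  rw [mem_blockSub, eq_comm, firstBlockImage_eq_iff]
  simp

theorem exists_firstBlockImage_eq_of_subset {S T : Finset (Fin n)} (hST : S ⊆ T) :
    ∃ k : Equiv.Perm (Fin n),
      firstBlockImage n S.card k = S ∧ firstBlockImage n T.card k = T := by
  have hcard : ∀ U : Finset (Fin n), Fintype.card {i : Fin n // (i : ℕ) < U.card} = U.card := by
    intro U
    rw [Fintype.card_subtype, Fin.card_filter_val_lt, min_eq_right (by simpa using U.card_le_univ)]
  obtain ⟨k, hk⟩ := Equiv.exists_forall_iff_and_iff_of_card_eq
    (P := fun i : Fin n => (i : ℕ) < S.card) (P' := fun i : Fin n => (i : ℕ) < T.card)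
    (Q := (· ∈ S)) (Q' := (· ∈ T))
    (fun i (hi : (i : ℕ) < S.card) => hi.trans_le (Finset.card_le_card hST)) hST rfl
    (by rw [hcard, Fintype.card_coe]) (by rw [hcard, Fintype.card_coe])
  exact ⟨k, firstBlockImage_eq_iff.mpr fun i => (hk i).1,
    firstBlockImage_eq_iff.mpr fun i => (hk i).2⟩

theorem firstBlockImage_eq_firstBlockImage_iff {g h : Equiv.Perm (Fin n)} (hp : p ≤ n)
    (hq : q ≤ n) :
    firstBlockImage n p g = firstBlockImage n q h ↔ p = q ∧ g⁻¹ * h ∈ blockSub n p := by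
  refine ⟨fun hgh => ?_, fun ⟨hpq, hgh⟩ => hpq ▸ inv_mul_mem_blockSub_iff.mp hgh⟩
  obtain rfl : p = q := by
    rw [← card_firstBlockImage g hp, hgh, card_firstBlockImage h hq]
  exact ⟨rfl, inv_mul_mem_blockSub_iff.mpr hgh⟩

theorem spLePerm_iff {g h : Equiv.Perm (Fin n)} (hp : p ≤ n) (hq : q ≤ n) :
    spLePerm n p q g h ↔ firstBlockImage n p g ⊆ firstBlockImage n q h := by
  constructor
  · rintro ⟨hpq, k, hgk, hhk⟩
    rw [inv_mul_mem_blockSub_iff.mp hgk, inv_mul_mem_blockSub_iff.mp hhk]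
    exact firstBlockImage_mono k hpq
  · intro hgh
    have hpq : p ≤ q := by
      simpa only [card_firstBlockImage _ hp, card_firstBlockImage _ hq]
        using Finset.card_le_card hgh
    obtain ⟨k, hgk, hhk⟩ := exists_firstBlockImage_eq_of_subset hgh
    rw [card_firstBlockImage g hp] at hgk
    rw [card_firstBlockImage h hq] at hhk
    exact ⟨hpq, k, inv_mul_mem_blockSub_iff.mpr hgk.symm, inv_mul_mem_blockSub_iff.mpr hhk.symm⟩

end

theorem stmt_1_general (n : ℕ) :
    (∀ p (g : Equiv.Perm (Fin n)), 1 ≤ p → p ≤ n - 1 →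
        (firstBlockImage n p g).Nonempty ∧ firstBlockImage n p g ≠ Finset.univ) ∧
    (∀ S : Finset (Fin n), S.Nonempty → S ≠ Finset.univ →
        ∃ p g, 1 ≤ p ∧ p ≤ n - 1 ∧ firstBlockImage n p g = S) ∧
    (∀ p q g h, 1 ≤ p → p ≤ n - 1 → 1 ≤ q → q ≤ n - 1 →
        (firstBlockImage n p g = firstBlockImage n q h ↔ p = q ∧ g⁻¹ * h ∈ blockSub n p)) ∧
    (∀ p q g h, 1 ≤ p → p ≤ n - 1 → 1 ≤ q → q ≤ n - 1 →
        (spLePerm n p q g h ↔ firstBlockImage n p g ⊆ firstBlockImage n q h)) := by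
  have hle : ∀ {p : ℕ}, p ≤ n - 1 → p ≤ n := fun h => h.trans (Nat.sub_le n 1)
  refine ⟨fun p g hp hpn => ⟨?_, ?_⟩, fun S hS hSu => ?_,
    fun p q g h _ hpn _ hqn => firstBlockImage_eq_firstBlockImage_iff (hle hpn) (hle hqn),
    fun p q g h _ hpn _ hqn => spLePerm_iff (hle hpn) (hle hqn)⟩
  · rw [← Finset.card_pos, card_firstBlockImage g (hle hpn)]
    omega
  · rw [← Finset.card_lt_iff_ne_univ, card_firstBlockImage g (hle hpn), Fintype.card_fin]
    omega
  · obtain ⟨k, hk, -⟩ := exists_firstBlockImage_eq_of_subset (subset_refl S)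
    have hSn : S.card < n := by simpa using (Finset.card_lt_iff_ne_univ S).mpr hSu
    exact ⟨S.card, k, hS.card_pos, by omega, hk⟩

/-- for the family of symmetric groups with block-sum multiplication, the
splitting poset `SP_n` is isomorphic to the poset of nonempty proper subsets of
`{1, ..., n}` under inclusion, via `g (Σ_p × Σ_{n-p}) ↦ {g(1), ..., g(p)}`: this map is
well defined and injective on cosets, surjects onto nonempty proper subsets, and
identifies the splitting-poset relation with inclusion. -/
theorem stmt_1 (n : ℕ) (hn : 2 ≤ n) :
    (∀ p (g : Equiv.Perm (Fin n)), 1 ≤ p → p ≤ n - 1 →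
        (firstBlockImage n p g).Nonempty ∧ firstBlockImage n p g ≠ Finset.univ) ∧
    (∀ S : Finset (Fin n), S.Nonempty → S ≠ Finset.univ →
        ∃ p g, 1 ≤ p ∧ p ≤ n - 1 ∧ firstBlockImage n p g = S) ∧
    (∀ p q g h, 1 ≤ p → p ≤ n - 1 → 1 ≤ q → q ≤ n - 1 →
        (firstBlockImage n p g = firstBlockImage n q h ↔ p = q ∧ g⁻¹ * h ∈ blockSub n p)) ∧
    (∀ p q g h, 1 ≤ p → p ≤ n - 1 → 1 ≤ q → q ≤ n - 1 →
        (spLePerm n p q g h ↔ firstBlockImage n p g ⊆ firstBlockImage n q h)) :=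
  stmt_1_general n
end

section
/- Let F be a free group and suppose f_p * f_{q+r} = f_{p+q} * f_r as automorphisms of F_{p+q+r} = F_p * F_q * F_r, where f_α ∈ Aut(F_α) and * denotes the free product of automorphisms along the free product decomposition. Then there exists f_q ∈ Aut(F_q) such that f_{q+r} = f_q * f_r. Equivalently, the intersection axiom (Aut(F_{p+q}) × Aut(F_r)) ∩ (Aut(F_p) × Aut(F_{q+r})) = Aut(F_p) × Aut(F_q) × Aut(F_r) holds inside Aut(F_{p+q+r}). -/
/-- The embedding `F_a → F_N` sending the `i`-th generator to the `(off + i)`-th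
generator. -/
def embF {a N : ℕ} (off : ℕ) (h : off + a ≤ N) : FreeGroup (Fin a) →* FreeGroup (Fin N) :=
  FreeGroup.lift fun i => FreeGroup.of ⟨off + (i : ℕ), by have := i.isLt; omega⟩

def retrF {a N : ℕ} (off : ℕ) : FreeGroup (Fin N) →* FreeGroup (Fin a) :=
  FreeGroup.lift fun j =>
    if h : off ≤ (j : ℕ) ∧ (j : ℕ) < off + a then FreeGroup.of ⟨(j : ℕ) - off, by omega⟩ else 1

lemma retr_emb {a N : ℕ} (off : ℕ) (h : off + a ≤ N) (x : FreeGroup (Fin a)) :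
    retrF (a := a) off (embF off h x) = x := by
  have key : (retrF (a := a) (N := N) off).comp (embF off h) = MonoidHom.id _ := by
    apply FreeGroup.ext_hom
    intro i
    have hi := i.isLt
    simp only [MonoidHom.comp_apply, MonoidHom.id_apply, embF, retrF, FreeGroup.lift_apply_of]
    rw [dif_pos ⟨Nat.le_add_right _ _, by omega⟩]
    congr 1
    ext
    simp
  calc retrF (a := a) off (embF off h x)
      = ((retrF (a := a) (N := N) off).comp (embF off h)) x := rfl
    _ = x := by rw [key]; rfl

lemma emb_emb {a b N : ℕ} (o1 o2 o3 : ℕ) (h1 : o1 + a ≤ b) (h2 : o2 + b ≤ N)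
    (h3 : o3 + a ≤ N) (ho : o3 = o2 + o1) (x : FreeGroup (Fin a)) :
    embF o2 h2 (embF o1 h1 x) = embF o3 h3 x := by
  have key : (embF (a := b) (N := N) o2 h2).comp (embF o1 h1) = embF o3 h3 := by
    apply FreeGroup.ext_hom
    intro i
    simp only [MonoidHom.comp_apply, embF, FreeGroup.lift_apply_of]
    congr 1
    ext
    simp [ho]
    omega
  calc embF o2 h2 (embF o1 h1 x)
      = ((embF (a := b) (N := N) o2 h2).comp (embF o1 h1)) x := rfl
    _ = embF o3 h3 x := by rw [key]

/-- `embF 0 ∘ retrF p = retrF p ∘ embF 0` as maps `F_{p+q} → F_{q+r}` (through `F_q` resp.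
`F_{p+q+r}`). -/
lemma emb_retr_comm (p q r : ℕ) (x : FreeGroup (Fin (p + q))) :
    embF (a := q) (N := q + r) 0 (by omega) (retrF (a := q) (N := p + q) p x)
      = retrF (a := q + r) (N := p + q + r) p (embF 0 (by omega) x) := by
  have key : (embF (a := q) (N := q + r) 0 (by omega)).comp (retrF (a := q) (N := p + q) p)
      = (retrF (a := q + r) (N := p + q + r) p).comp (embF 0 (by omega)) := by
    apply FreeGroup.ext_hom
    intro i
    have hi := i.isLt
    simp only [MonoidHom.comp_apply, embF, retrF, FreeGroup.lift_apply_of]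
    by_cases hc : p ≤ (i : ℕ)
    · rw [dif_pos ⟨hc, by omega⟩, dif_pos (by simp; omega)]
      simp only [FreeGroup.lift_apply_of]
      congr 1
      ext
      simp
    · rw [dif_neg (by omega), dif_neg (by simp; omega)]
      simp
  calc embF (a := q) (N := q + r) 0 (by omega) (retrF (a := q) (N := p + q) p x)
      = ((embF (a := q) (N := q + r) 0 (by omega)).comp (retrF (a := q) (N := p + q) p)) x := rfl
    _ = _ := by rw [key]; rfl

lemma key_step (p q r : ℕ)
    (fqr : FreeGroup (Fin (q + r)) → FreeGroup (Fin (q + r)))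
    (fpq : FreeGroup (Fin (p + q)) → FreeGroup (Fin (p + q)))
    (φ : FreeGroup (Fin (p + q + r)) → FreeGroup (Fin (p + q + r)))
    (hA : ∀ y, φ (embF (a := q + r) p (by omega) y) = embF p (by omega) (fqr y))
    (hB : ∀ x, φ (embF (a := p + q) 0 (by omega) x) = embF 0 (by omega) (fpq x))
    (x : FreeGroup (Fin q)) :
    embF (a := q) (N := q + r) 0 (by omega)
        (retrF (a := q) (N := p + q) p (fpq (embF p (le_refl _) x)))
      = fqr (embF 0 (by omega) x) := by
  rw [emb_retr_comm, ← hB,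
    emb_emb (a := q) (b := p + q) (N := p + q + r) p 0 p (le_refl _) (by omega) (by omega)
      (by omega) x,
    ← emb_emb (a := q) (b := q + r) (N := p + q + r) 0 p p (by omega) (by omega) (by omega)
      (by omega) x,
    hA, retr_emb]

/-- `φ` is the free product `f * g` of automorphisms along the decomposition
`F_N = F_α * F_β` (`α + β = N`): it acts as `f` on the subgroup generated by the first
`α` generators and as `g` on the subgroup generated by the last `β` generators. -/
def IsFreeProdAut {α β N : ℕ} (hab : α + β = N)
    (f : FreeGroup (Fin α) → FreeGroup (Fin α))
    (g : FreeGroup (Fin β) → FreeGroup (Fin β))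
    (φ : FreeGroup (Fin N) → FreeGroup (Fin N)) : Prop :=
  (∀ x, φ (embF (a := α) (N := N) 0 (by omega) x) = embF 0 (by omega) (f x)) ∧
  (∀ y, φ (embF (a := β) (N := N) α (by omega) y) = embF α (by omega) (g y))

/-- if `f_p * f_{q+r} = f_{p+q} * f_r` as automorphisms of
`F_{p+q+r} = F_p * F_q * F_r`, then there is `f_q ∈ Aut(F_q)` with `f_{q+r} = f_q * f_r`;
i.e. the intersection axiom holds for the automorphism groups of free groups. -/
theorem stmt_2 (p q r : ℕ)
    (fp : FreeGroup (Fin p) ≃* FreeGroup (Fin p))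
    (fqr : FreeGroup (Fin (q + r)) ≃* FreeGroup (Fin (q + r)))
    (fpq : FreeGroup (Fin (p + q)) ≃* FreeGroup (Fin (p + q)))
    (fr : FreeGroup (Fin r) ≃* FreeGroup (Fin r))
    (φ : FreeGroup (Fin (p + q + r)) ≃* FreeGroup (Fin (p + q + r)))
    (h1 : IsFreeProdAut (by omega : p + (q + r) = p + q + r) ⇑fp ⇑fqr ⇑φ)
    (h2 : IsFreeProdAut (rfl : p + q + r = p + q + r) ⇑fpq ⇑fr ⇑φ) :
    ∃ fq : FreeGroup (Fin q) ≃* FreeGroup (Fin q),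
      IsFreeProdAut (rfl : q + r = q + r) ⇑fq ⇑fr ⇑fqr := by
  obtain ⟨h1a, h1b⟩ := h1
  obtain ⟨h2a, h2b⟩ := h2
  have h1b' : ∀ y, φ.symm (embF (a := q + r) (N := p + q + r) p (by omega) y)
      = embF p (by omega) (fqr.symm y) := by
    intro y
    have := h1b (fqr.symm y)
    rw [MulEquiv.apply_symm_apply] at this
    rw [← this, MulEquiv.symm_apply_apply]
  have h2a' : ∀ x, φ.symm (embF (a := p + q) (N := p + q + r) 0 (by omega) x)
      = embF 0 (by omega) (fpq.symm x) := by
    intro x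
    have := h2a (fpq.symm x)
    rw [MulEquiv.apply_symm_apply] at this
    rw [← this, MulEquiv.symm_apply_apply]
  set F : FreeGroup (Fin q) →* FreeGroup (Fin q) :=
    (retrF (a := q) (N := p + q) p).comp
      ((fpq : FreeGroup (Fin (p + q)) →* FreeGroup (Fin (p + q))).comp
        (embF p (le_refl _))) with hFdef
  set G : FreeGroup (Fin q) →* FreeGroup (Fin q) :=
    (retrF (a := q) (N := p + q) p).comp
      ((fpq.symm : FreeGroup (Fin (p + q)) →* FreeGroup (Fin (p + q))).comp
        (embF p (le_refl _))) with hGdef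
  have hF : ∀ x, embF (a := q) (N := q + r) 0 (by omega) (F x)
      = fqr (embF 0 (by omega) x) := fun x =>
    key_step p q r ⇑fqr ⇑fpq ⇑φ h1b h2a x
  have hG : ∀ x, embF (a := q) (N := q + r) 0 (by omega) (G x)
      = fqr.symm (embF 0 (by omega) x) := fun x =>
    key_step p q r ⇑fqr.symm ⇑fpq.symm ⇑φ.symm h1b' h2a' x
  have hinj : Function.Injective (embF (a := q) (N := q + r) 0 (by omega)) := by
    intro a b hab
    have := congrArg (retrF (a := q) (N := q + r) 0) hab
    rwa [retr_emb, retr_emb] at this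
  refine ⟨⟨⟨⇑F, ⇑G, ?_, ?_⟩, F.map_mul⟩, ?_, ?_⟩
  · intro x
    apply hinj
    rw [hG, hF, MulEquiv.symm_apply_apply]
  · intro x
    apply hinj
    rw [hF, hG, MulEquiv.apply_symm_apply]
  · intro x
    exact (hF x).symm
  · intro y
    have hinj' : Function.Injective (embF (a := q + r) (N := p + q + r) p (by omega)) := by
      intro a b hab
      have := congrArg (retrF (a := q + r) (N := p + q + r) p) hab
      rwa [retr_emb, retr_emb] at this
    apply hinj'
    rw [← h1b,
      emb_emb (a := r) (b := q + r) (N := p + q + r) q p (p + q) (le_refl _) (by omega)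
        (by omega) (by omega) y,
      h2b,
      ← emb_emb (a := r) (b := q + r) (N := p + q + r) q p (p + q) (le_refl _) (by omega)
        (by omega) (by omega) (fr y)]
end

section
/- Let R be a PID and S_R(R^n) the poset of ordered pairs (P,Q) of proper submodules of R^n with P ⊕ Q = R^n, ordered by (P,Q) ≤ (P',Q') iff P ⊆ P' and Q ⊇ Q'. Then GL_n(R) acts transitively on the elements of S_R(R^n) of any fixed rank type: every (P,Q) with rank(P) = p equals A·(span(x_1,...,x_p), span(x_{p+1},...,x_n)) for some A ∈ GL_n(R), where x_1,...,x_n is the standard basis. -/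
/-- The submodule of `R^n` of vectors supported on the first `p` coordinates,
i.e. `span(x_1,...,x_p)` for the standard basis. -/
def lowCoords (R : Type*) [CommRing R] (n p : ℕ) : Submodule R (Fin n → R) where
  carrier := {f | ∀ i : Fin n, p ≤ (i : ℕ) → f i = 0}
  add_mem' := fun {a b} ha hb i hi => by simp [ha i hi, hb i hi]
  zero_mem' := fun i _ => rfl
  smul_mem' := fun c f hf i hi => by simp [hf i hi]

/-- The submodule of `R^n` of vectors supported on the last `n - p` coordinates,
i.e. `span(x_{p+1},...,x_n)` for the standard basis. -/
def highCoords (R : Type*) [CommRing R] (n p : ℕ) : Submodule R (Fin n → R) where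
  carrier := {f | ∀ i : Fin n, (i : ℕ) < p → f i = 0}
  add_mem' := fun {a b} ha hb i hi => by simp [ha i hi, hb i hi]
  zero_mem' := fun i _ => rfl
  smul_mem' := fun c f hf i hi => by simp [hf i hi]


/-!
Both `(P, Q)` and the coordinate splitting decompose `R^n` as a direct sum, so an automorphism
carrying one to the other is assembled from isomorphisms between the corresponding summands.
Over a PID the summands are free, so such isomorphisms exist as soon as the ranks agree; the
rank of the first summand is `p` on both sides, and the ranks of the complements then agree
because ranks add up to `n`.
-/

open Module

theorem Submodule.map_eq_of_apply_eq_linearEquiv {R E F : Type*} [CommRing R] [AddCommGroup E]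
    [Module R E] [AddCommGroup F] [Module R F] {f : E →ₗ[R] F} {p : Submodule R E}
    {q : Submodule R F} (e : p ≃ₗ[R] q) (h : ∀ x : p, f x = e x) : p.map f = q := by
  have hcomp : f ∘ₗ p.subtype = q.subtype ∘ₗ (e : p →ₗ[R] q) := LinearMap.ext h
  rw [← p.range_subtype, ← LinearMap.range_comp, hcomp, LinearEquiv.range_comp, q.range_subtype]

theorem exists_linearEquiv_map_eq_of_isCompl {R E : Type*} [CommRing R] [AddCommGroup E]
    [Module R E] {P Q L H : Submodule R E} (hPQ : IsCompl P Q) (hLH : IsCompl L H)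
    (eL : L ≃ₗ[R] P) (eH : H ≃ₗ[R] Q) :
    ∃ A : E ≃ₗ[R] E, P = L.map (A : E →ₗ[R] E) ∧ Q = H.map (A : E →ₗ[R] E) := by
  let A : E ≃ₗ[R] E := (Submodule.prodEquivOfIsCompl L H hLH).symm ≪≫ₗ eL.prodCongr eH ≪≫ₗ
    Submodule.prodEquivOfIsCompl P Q hPQ
  refine ⟨A, (Submodule.map_eq_of_apply_eq_linearEquiv eL fun x => ?_).symm,
    (Submodule.map_eq_of_apply_eq_linearEquiv eH fun x => ?_).symm⟩ <;> simp [A]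

theorem finrank_add_finrank_of_isCompl {R E : Type*} [CommRing R] [StrongRankCondition R]
    [AddCommGroup E] [Module R E] {M N : Submodule R E} [Module.Free R M] [Module.Finite R M]
    [Module.Free R N] [Module.Finite R N] (h : IsCompl M N) :
    finrank R M + finrank R N = finrank R E := by
  rw [← finrank_prod, (Submodule.prodEquivOfIsCompl M N h).finrank_eq]

theorem exists_linearEquiv_map_eq_of_isCompl_of_finrank_eq {R E : Type*} [CommRing R] [IsDomain R]
    [IsPrincipalIdealRing R] [AddCommGroup E] [Module R E] [Module.Free R E] [Module.Finite R E]
    {P Q L H : Submodule R E} (hPQ : IsCompl P Q) (hLH : IsCompl L H)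
    (hrank : finrank R L = finrank R P) :
    ∃ A : E ≃ₗ[R] E, P = L.map (A : E →ₗ[R] E) ∧ Q = H.map (A : E →ₗ[R] E) := by
  have hrank' : finrank R H = finrank R Q := by
    have := finrank_add_finrank_of_isCompl hPQ
    have := finrank_add_finrank_of_isCompl hLH
    omega
  exact exists_linearEquiv_map_eq_of_isCompl hPQ hLH (.ofFinrankEq _ _ hrank)
    (.ofFinrankEq _ _ hrank')

theorem lowCoords_eq_iInf_ker_proj (R : Type*) [CommRing R] (n p : ℕ) :
    lowCoords R n p = ⨅ i ∈ {i : Fin n | p ≤ i}, LinearMap.ker (LinearMap.proj i) := by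
  ext f
  simp [lowCoords, Submodule.mem_iInf]

theorem finrank_lowCoords (R : Type*) [CommRing R] [StrongRankCondition R] {n p : ℕ}
    (hpn : p ≤ n) : finrank R (lowCoords R n p) = p := by
  classical
  rw [lowCoords_eq_iInf_ker_proj,
    (LinearMap.iInfKerProjEquiv R (fun _ : Fin n => R) (I := {i | i < p}) (J := {i | p ≤ i})
      (Set.disjoint_left.2 fun i hI hJ => by simp at hI hJ; omega)
      (fun i _ => by simp; omega)).finrank_eq,
    finrank_fintype_fun_eq_card]
  exact Fintype.card_fin_lt_of_le hpn

theorem isCompl_lowCoords_highCoords (R : Type*) [CommRing R] (n p : ℕ) :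
    IsCompl (lowCoords R n p) (highCoords R n p) := by
  refine ⟨Submodule.disjoint_def.2 fun f hlow hhigh => funext fun i => ?_,
    codisjoint_iff_le_sup.2 fun f _ => Submodule.mem_sup.2 ?_⟩
  · by_cases hi : (i : ℕ) < p
    · exact hhigh i hi
    · exact hlow i (not_lt.1 hi)
  · refine ⟨fun i => if (i : ℕ) < p then f i else 0, fun i hi => if_neg (by omega),
      fun i => if (i : ℕ) < p then 0 else f i, fun i hi => if_pos hi, funext fun i => ?_⟩
    by_cases hi : (i : ℕ) < p <;> simp [hi]

theorem stmt_4_general (R : Type*) [CommRing R] [IsDomain R] [IsPrincipalIdealRing R] (n p : ℕ)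
    (P Q : Submodule R (Fin n → R)) (h : IsCompl P Q)
    (hrank : Module.finrank R P = p) :
    ∃ A : (Fin n → R) ≃ₗ[R] (Fin n → R),
      P = Submodule.map (A : (Fin n → R) →ₗ[R] (Fin n → R)) (lowCoords R n p) ∧
      Q = Submodule.map (A : (Fin n → R) →ₗ[R] (Fin n → R)) (highCoords R n p) := by
  have hpn : p ≤ n := hrank ▸ (Submodule.finrank_le P).trans_eq (finrank_fin_fun R)
  exact exists_linearEquiv_map_eq_of_isCompl_of_finrank_eq h (isCompl_lowCoords_highCoords R n p)
    ((finrank_lowCoords R hpn).trans hrank.symm)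

/-- For a PID `R`, `GL_n(R)` acts transitively on splittings `(P,Q)` of `R^n`
of a fixed rank type: every such pair with `rank P = p` is obtained from the standard
coordinate splitting `(span(x_1,...,x_p), span(x_{p+1},...,x_n))` by applying an
automorphism `A` of `R^n`. -/
theorem stmt_4 (R : Type*) [CommRing R] [IsDomain R] [IsPrincipalIdealRing R] (n p : ℕ)
    (P Q : Submodule R (Fin n → R)) (h : IsCompl P Q) (hP : P ≠ ⊤) (hQ : Q ≠ ⊤)
    (hrank : Module.finrank R P = p) :
    ∃ A : (Fin n → R) ≃ₗ[R] (Fin n → R),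
      P = Submodule.map (A : (Fin n → R) →ₗ[R] (Fin n → R)) (lowCoords R n p) ∧
      Q = Submodule.map (A : (Fin n → R) →ₗ[R] (Fin n → R)) (highCoords R n p) :=
  stmt_4_general R n p P Q h hrank
end

section
/- The abelianization of SL_2(ℤ) is cyclic of order 12, and the action of the matrix s = diag(-1,1) by conjugation on H_1(SL_2(ℤ);ℤ) ≅ ℤ/12ℤ is by negation; consequently the coinvariants H_1(SL_2(ℤ);ℤ)_{⟨s⟩} form a group of order 2 generated by the class of the matrix t = [[1,1],[0,1]]. -/
open Matrix

/-- `SL_2(ℤ)`. -/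
abbrev SL2Z := Matrix.SpecialLinearGroup (Fin 2) ℤ

/-- The matrix `diag(-1, 1)`. -/
def sMat : Matrix (Fin 2) (Fin 2) ℤ := !![-1, 0; 0, 1]

/-- Conjugation by `s = diag(-1,1)` on `SL_2(ℤ)` (note `s⁻¹ = s`). -/
def sConj (A : SL2Z) : SL2Z :=
  ⟨sMat * A.val * sMat, by
    have hs : sMat.det = -1 := by simp [sMat, Matrix.det_fin_two_of]
    have hA : A.val.det = 1 := A.prop
    rw [Matrix.det_mul, Matrix.det_mul, hs, hA]; ring⟩

/-- The matrix `t = [[1,1],[0,1]]` in `SL_2(ℤ)`. -/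
def tSL : SL2Z := ⟨!![1, 1; 0, 1], by simp [Matrix.det_fin_two_of]⟩

/-! `Abelianization SL(2, ℤ)` is generated by the classes `s`, `t` of `S` and `T`, and the
relations `S ^ 4 = 1`, `S ^ 2 = (S * T) ^ 3` give `s = t⁻³` and `t ^ 12 = 1`. Two characters
`SL(2, ℤ) → ℤ/3` and `SL(2, ℤ) → ℤ/4`, polynomial in the entries reduced mod 3 and mod 4, send
`T` to `1`, so `t` has order exactly `12`. Conjugation by `diag(-1, 1)` inverts `S` and `T`, hence
acts on the abelianization by inversion; the coinvariants are then the quotient by the squares,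
of order `gcd(12, 2) = 2`, and `t` survives in it because it generates. -/

open MatrixGroups ModularGroup

namespace MonoidHom

def ofSubgroupClosureEqTopRight {G N : Type*} [Group G] [Group N] {s : Set G} (f : G → N)
    (hs : Subgroup.closure s = ⊤) (h1 : f 1 = 1) (hmul : ∀ x, ∀ y ∈ s, f (x * y) = f x * f y) :
    G →* N :=
  ofClosureMEqTopRight f (s := s ∪ s⁻¹)
    (by rw [← Subgroup.closure_toSubmonoid, hs, Subgroup.top_toSubmonoid]) h1 <| by
      rintro x y (hy | hy)
      · exact hmul x y hy
      · have hx := hmul (x * y) y⁻¹ hy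
        have hy1 := hmul y y⁻¹ hy
        rw [mul_inv_cancel_right] at hx
        rw [mul_inv_cancel, h1] at hy1
        rw [hx, mul_assoc, eq_inv_of_mul_eq_one_right hy1.symm, inv_mul_cancel, mul_one]

@[simp]
lemma coe_ofSubgroupClosureEqTopRight {G N : Type*} [Group G] [Group N] {s : Set G} (f : G → N)
    (hs : Subgroup.closure s = ⊤) (h1 hmul) :
    ⇑(ofSubgroupClosureEqTopRight f hs h1 hmul) = f :=
  rfl

end MonoidHom

lemma Abelianization.of_surjective {G : Type*} [Group G] :
    Function.Surjective (Abelianization.of (G := G)) :=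
  fun x => Quotient.inductionOn' x fun A => ⟨A, rfl⟩

namespace SL2Z

lemma cast_det_entries {R : Type*} [CommRing R] (A : SL2Z) :
    (A 0 0 : R) * A 1 1 - A 0 1 * A 1 0 = 1 := by
  have h := A.det_coe
  rw [Matrix.det_fin_two] at h
  exact_mod_cast congrArg (Int.cast : ℤ → R) h

/-- `P a b c d` changes by `1` and by `k` when `!![a, b; c, d]` is multiplied on the right by `T`
and by `S`, whose entries are `!![a, a + b; c, c + d]` and `!![b, -a; d, -c]`. -/
structure IsCharPoly {n : ℕ} (P : ZMod n → ZMod n → ZMod n → ZMod n → ZMod n) (k : ZMod n) :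
    Prop where
  map_one : P 1 0 0 1 = 0
  mul_T : ∀ a b c d, a * d - b * c = 1 → P a (a + b) c (c + d) = P a b c d + 1
  mul_S : ∀ a b c d, a * d - b * c = 1 → P b (-a) d (-c) = P a b c d + k

namespace IsCharPoly

variable {n : ℕ} {P : ZMod n → ZMod n → ZMod n → ZMod n → ZMod n} {k : ZMod n}

lemma apply_T (hP : IsCharPoly P k) : P 1 1 0 1 = 1 := by
  simpa [hP.map_one] using hP.mul_T 1 0 0 1 (by simp)

lemma apply_S (hP : IsCharPoly P k) : P 0 (-1) 1 0 = k := by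
  simpa [hP.map_one] using hP.mul_S 1 0 0 1 (by simp)

def char (hP : IsCharPoly P k) : SL2Z →* Multiplicative (ZMod n) :=
  MonoidHom.ofSubgroupClosureEqTopRight
    (fun A => Multiplicative.ofAdd (P (A 0 0) (A 0 1) (A 1 0) (A 1 1)))
    SpecialLinearGroup.SL2Z_generators (by simpa using hP.map_one) <| by
      rintro A _ (rfl | rfl)
      · simp [Matrix.mul_apply, Fin.sum_univ_two, hP.mul_S _ _ _ _ (cast_det_entries A), hP.apply_S]
      · simp [Matrix.mul_apply, Fin.sum_univ_two, hP.mul_T _ _ _ _ (cast_det_entries A), hP.apply_T]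

lemma char_T (hP : IsCharPoly P k) : hP.char T = Multiplicative.ofAdd 1 := by
  simp [char, hP.apply_T]

lemma dvd_orderOf_abelianization_of_T (hP : IsCharPoly P k) :
    n ∣ orderOf (Abelianization.of T) := by
  have h := orderOf_map_dvd (Abelianization.lift hP.char) (Abelianization.of T)
  rwa [Abelianization.lift_apply_of, hP.char_T, orderOf_ofAdd_eq_addOrderOf,
    ZMod.addOrderOf_one] at h

end IsCharPoly

/- The characters of `SL(2, ℤ/3)` and `SL(2, ℤ/4)` sending `T` to `1`, interpolated by
polynomials in the entries. -/

def charPolyMod3 (a b c d : ZMod 3) : ZMod 3 := a * c + b * d + c * d - b * c ^ 2 * d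

def charPolyMod4 (a b c d : ZMod 4) : ZMod 4 :=
  a * b + a * d + c * d + 2 * a * c - b * c ^ 2 - a ^ 2 * d

lemma isCharPoly_charPolyMod3 : IsCharPoly charPolyMod3 0 := ⟨by decide, by decide, by decide⟩

lemma isCharPoly_charPolyMod4 : IsCharPoly charPolyMod4 1 := ⟨by decide, by decide, by decide⟩

lemma abelianization_of_S : Abelianization.of S = (Abelianization.of T ^ 3)⁻¹ := by
  have h : Abelianization.of S ^ 2 * (Abelianization.of S * Abelianization.of T ^ 3) =
      Abelianization.of S ^ 2 * 1 := by
    rw [mul_one, ← mul_assoc, ← pow_succ, ← mul_pow, ← map_mul, ← map_pow, ← map_pow,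
      show (S : SL2Z) ^ 2 = (S * T) ^ 3 by decide]
  exact eq_inv_of_mul_eq_one_left (mul_left_cancel h)

lemma abelianization_of_T_pow_twelve : Abelianization.of T ^ 12 = 1 := by
  calc Abelianization.of T ^ 12 = (Abelianization.of S ^ 4)⁻¹ := by
        rw [abelianization_of_S, inv_pow, inv_inv, ← pow_mul]
    _ = 1 := by rw [← map_pow, show (S : SL2Z) ^ 4 = 1 by decide, map_one, inv_one]

lemma orderOf_abelianization_of_T : orderOf (Abelianization.of T) = 12 :=
  Nat.dvd_antisymm (orderOf_dvd_of_pow_eq_one abelianization_of_T_pow_twelve)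
    (Nat.Coprime.mul_dvd_of_dvd_of_dvd (by norm_num)
      isCharPoly_charPolyMod3.dvd_orderOf_abelianization_of_T
      isCharPoly_charPolyMod4.dvd_orderOf_abelianization_of_T)

lemma zpowers_abelianization_of_T : Subgroup.zpowers (Abelianization.of T) = ⊤ := by
  rw [eq_top_iff, ← MonoidHom.range_eq_top.mpr Abelianization.of_surjective,
    MonoidHom.range_eq_map, ← SpecialLinearGroup.SL2Z_generators, MonoidHom.map_closure,
    Set.image_pair, Subgroup.closure_le, Set.insert_subset_iff, Set.singleton_subset_iff,
    abelianization_of_S]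
  exact ⟨inv_mem (pow_mem (Subgroup.mem_zpowers _) 3), Subgroup.mem_zpowers _⟩

end SL2Z

open SL2Z

lemma sMat_mul_self : sMat * sMat = 1 := by decide

def sConjHom : SL2Z →* SL2Z where
  toFun := sConj
  map_one' := Subtype.ext <| by simp [sConj, sMat_mul_self]
  map_mul' A B := Subtype.ext <| by
    show sMat * (A.1 * B.1) * sMat = (sMat * A.1 * sMat) * (sMat * B.1 * sMat)
    simp only [Matrix.mul_assoc]
    rw [← Matrix.mul_assoc sMat sMat, sMat_mul_self, Matrix.one_mul]

lemma abelianization_of_sConj (A : SL2Z) :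
    Abelianization.of (sConj A) = (Abelianization.of A)⁻¹ := by
  suffices h : Abelianization.of.comp sConjHom = Abelianization.of⁻¹ from DFunLike.congr_fun h A
  have hST : ∀ g ∈ ({S, T} : Set SL2Z), sConj g = g⁻¹ := by rintro _ (rfl | rfl) <;> decide
  refine MonoidHom.eq_of_eqOn_dense SpecialLinearGroup.SL2Z_generators fun g hg => ?_
  change Abelianization.of (sConj g) = (Abelianization.of g)⁻¹
  rw [hST g hg, map_inv]

lemma closure_coinvariantRelations_eq_range_sq :
    Subgroup.closure {x | ∃ A : SL2Z, x = Abelianization.of A * (Abelianization.of (sConj A))⁻¹} =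
      (powMonoidHom 2 : Abelianization SL2Z →* Abelianization SL2Z).range := by
  have h : {x | ∃ A : SL2Z, x = Abelianization.of A * (Abelianization.of (sConj A))⁻¹} =
      (powMonoidHom 2 : Abelianization SL2Z →* Abelianization SL2Z).range := by
    ext x
    simp only [Set.mem_ofPred_eq, abelianization_of_sConj, inv_inv, ← sq, SetLike.mem_coe,
      MonoidHom.mem_range, powMonoidHom_apply, Abelianization.of_surjective.exists, eq_comm]
  rw [h, Subgroup.closure_eq]

/-- the abelianization of `SL_2(ℤ)` is cyclic of order 12, conjugation by
`s = diag(-1,1)` acts on it by negation (inversion, in multiplicative notation), and the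
coinvariants of this action form a group of order 2 generated by the class of
`t = [[1,1],[0,1]]`. -/
theorem stmt_5 :
    (IsCyclic (Abelianization SL2Z) ∧ Nat.card (Abelianization SL2Z) = 12) ∧
    (∀ A : SL2Z, Abelianization.of (sConj A) = (Abelianization.of A)⁻¹) ∧
    (Nat.card
        (Abelianization SL2Z ⧸
          Subgroup.closure
            {x | ∃ A : SL2Z, x = Abelianization.of A * (Abelianization.of (sConj A))⁻¹}) = 2 ∧
      (QuotientGroup.mk' (Subgroup.closure
            {x | ∃ A : SL2Z, x = Abelianization.of A * (Abelianization.of (sConj A))⁻¹}))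
          (Abelianization.of tSL) ≠ 1) := by
  have hgen := zpowers_abelianization_of_T
  have hcard : Nat.card (Abelianization SL2Z) = 12 := by
    rw [← orderOf_eq_card_of_forall_mem_zpowers ((Subgroup.eq_top_iff' _).mp hgen),
      orderOf_abelianization_of_T]
  have : Finite (Abelianization SL2Z) := Nat.finite_of_card_ne_zero (by rw [hcard]; norm_num)
  have hcyc : IsCyclic (Abelianization SL2Z) := isCyclic_iff_exists_zpowers_eq_top.mpr ⟨_, hgen⟩
  have hindex : (powMonoidHom 2 : Abelianization SL2Z →* _).range.index = 2 := by
    rw [IsCyclic.index_powMonoidHom_range, hcard]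
    rfl
  rw [closure_coinvariantRelations_eq_range_sq, show tSL = T from rfl, QuotientGroup.mk'_apply,
    Ne, QuotientGroup.eq_one_iff]
  refine ⟨⟨hcyc, hcard⟩, abelianization_of_sConj, hindex, fun hT => ?_⟩
  rw [eq_top_iff.mpr (hgen.ge.trans (Subgroup.zpowers_le.mpr hT)), Subgroup.index_top] at hindex
  omega
end

section
/- The abelianizations of GL_1(ℤ), GL_2(ℤ), GL_3(ℤ) are elementary abelian 2-groups: GL_1(ℤ)_ab ≅ ℤ/2 generated by (-1); GL_2(ℤ)_ab ≅ (ℤ/2)^2 generated by the classes of diag(-1,1) and [[1,1],[0,1]]; GL_3(ℤ)_ab ≅ ℤ/2 generated by diag(-1,1,1). Moreover the stabilisation maps (block sum with the 1×1 identity) send diag(-1,1) ↦ diag(-1,1,1) and [[1,1],[0,1]] ↦ 0 in GL_3(ℤ)_ab. -/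
open Matrix

/-- Block sum with a `1×1` identity block, as a multiplicative map of matrix monoids
(the new coordinate comes first). -/
def stabMonoidHom (n : ℕ) :
    Matrix (Fin n) (Fin n) ℤ →* Matrix (Fin (1 + n)) (Fin (1 + n)) ℤ where
  toFun A := (Matrix.fromBlocks (1 : Matrix (Fin 1) (Fin 1) ℤ) 0 0 A).submatrix
    finSumFinEquiv.symm finSumFinEquiv.symm
  map_one' := by
    show (Matrix.fromBlocks (1 : Matrix (Fin 1) (Fin 1) ℤ) 0 0 (1 : Matrix (Fin n) (Fin n) ℤ)).submatrix
        finSumFinEquiv.symm finSumFinEquiv.symm = 1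
    rw [Matrix.fromBlocks_one]
    exact Matrix.submatrix_one_equiv finSumFinEquiv.symm
  map_mul' A B := by
    show (Matrix.fromBlocks (1 : Matrix (Fin 1) (Fin 1) ℤ) 0 0 (A * B)).submatrix
        finSumFinEquiv.symm finSumFinEquiv.symm = _
    rw [show (Matrix.fromBlocks (1 : Matrix (Fin 1) (Fin 1) ℤ) 0 0 (A * B))
        = Matrix.fromBlocks 1 0 0 A * Matrix.fromBlocks 1 0 0 B by
        rw [Matrix.fromBlocks_multiply]; simp]
    rw [← Matrix.submatrix_mul_equiv (Matrix.fromBlocks 1 0 0 A) (Matrix.fromBlocks 1 0 0 B)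
      _ finSumFinEquiv.symm _]

/-- The stabilisation map `GL_n(ℤ) → GL_{1+n}(ℤ)`, block sum with a `1×1` identity. -/
def stabGL (n : ℕ) : GL (Fin n) ℤ →* GL (Fin (1 + n)) ℤ := Units.map (stabMonoidHom n)

/-- An element of `GL_n(ℤ)` from a matrix which is its own inverse. -/
def glOfInvol {n : ℕ} (M : Matrix (Fin n) (Fin n) ℤ) (h : M * M = 1) : GL (Fin n) ℤ :=
  ⟨M, M, h, h⟩

def s1 : GL (Fin 1) ℤ := glOfInvol !![-1] (by decide)

def s2 : GL (Fin 2) ℤ := glOfInvol !![-1, 0; 0, 1] (by decide)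

def t2 : GL (Fin 2) ℤ :=
  ⟨!![1, 1; 0, 1], !![1, -1; 0, 1], by decide, by decide⟩

def s3 : GL (Fin 3) ℤ := glOfInvol !![-1, 0, 0; 0, 1, 0; 0, 0, 1] (by decide)

/-!
Over `ℤ` every determinant is `±1`, so `GL_n(ℤ)` is generated by `SL_n(ℤ)` and any one matrix of
determinant `-1`; and `SL(2, ℤ)` is generated by `S` and `T`.

For `n = 3` every elementary transvection is a commutator, `E_ij(c) = [E_ik(c), E_kj(1)]`, and `S`,
`T` stabilise to products of transvections. Two Bezout matrices of `SL(2, ℤ)`, stabilised into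
`GL_3(ℤ)` (the second one conjugated by a cyclic permutation of the coordinates), move the first
column of any `A ∈ SL_3(ℤ)` to `e₀`, and what is left is `diag(1, B) · E₀₁(x) E₀₂(y)`. So all of
`SL_3(ℤ)` dies in the abelianization, which the determinant therefore identifies with `ℤˣ`; for
`n = 1` there is nothing to do.

For `n = 2`, `diag(-1, 1)` conjugates `T` to `T⁻¹`, and `S⁻¹ = T · (S T S⁻¹) · T` makes the class
of `S` a power of that of `T`, so the abelianization is generated by two involutions. They are told
apart by the determinant and by the sign of the permutation of `(ℤ/2)²` given by reduction mod `2`.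
-/

open MatrixGroups ModularGroup
open Matrix.SpecialLinearGroup (toGL coe_GL_coe_matrix)
open scoped commutatorElement

namespace Abelianization

variable {G A : Type*} [Group G] [CommGroup A]

theorem of_surjective_s6 : Function.Surjective (of : G → Abelianization G) :=
  QuotientGroup.mk_surjective

theorem of_conj (g h : G) : of (g * h * g⁻¹) = of h := by
  rw [map_mul, map_mul, map_inv, mul_inv_cancel_comm]

theorem of_commutatorElement (a b : G) : of ⁅a, b⁆ = 1 := by
  rw [map_commutatorElement, commutatorElement_eq_one_iff_mul_comm]
  exact mul_comm _ _

theorem of_ne_one_of_map_ne_one (f : G →* A) {g : G} (hg : f g ≠ 1) : of g ≠ 1 := fun h =>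
  hg (by rw [← lift_apply_of, h, map_one])

theorem lift_injective_of {f : G →* A} (hf : ∀ g, f g = 1 → of g = 1) :
    Function.Injective (lift f) := by
  refine (injective_iff_map_eq_one _).mpr fun x hx => ?_
  obtain ⟨g, rfl⟩ := of_surjective_s6 x
  exact hf g (by rwa [lift_apply_of] at hx)

end Abelianization

theorem mul_self_eq_one_of_injective {G A : Type*} [Monoid G] [Monoid A] {f : G →* A}
    (hf : Function.Injective f) (hA : ∀ a : A, a * a = 1) (x : G) : x * x = 1 :=
  hf (by rw [map_mul, map_one, hA])

theorem Subgroup.mem_closure_pair_of_mul_self_eq_one {G : Type*} [CommGroup G] {a b x : G}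
    (ha : a * a = 1) (hb : b * b = 1) (hx : x ∈ closure {a, b}) :
    x = 1 ∨ x = a ∨ x = b ∨ x = a * b := by
  have ha' : a⁻¹ = a := inv_eq_of_mul_eq_one_right ha
  have hb' : b⁻¹ = b := inv_eq_of_mul_eq_one_right hb
  induction hx using closure_induction with
  | mem x hx => rcases hx with rfl | rfl <;> simp
  | one => simp
  | mul x y _ _ hx hy =>
    rcases hx with rfl | rfl | rfl | rfl <;> rcases hy with rfl | rfl | rfl | rfl <;>
      simp [ha, hb, mul_comm, mul_left_comm]
  | inv x _ hx => rcases hx with rfl | rfl | rfl | rfl <;> simp [ha', hb', mul_comm]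

namespace Matrix

section Transvection

variable {n R : Type*} [Fintype n] [DecidableEq n] [CommRing R]

def transvectionGL (i j : n) (c : R) (hij : i ≠ j := by decide) : GL n R :=
  ⟨transvection i j c, transvection i j (-c),
    by rw [transvection_mul_transvection_same _ _ hij, add_neg_cancel, transvection_zero],
    by rw [transvection_mul_transvection_same _ _ hij, neg_add_cancel, transvection_zero]⟩

theorem commutatorElement_transvectionGL {i j k : n} (hij : i ≠ j) (hik : i ≠ k) (hkj : k ≠ j)
    (c : R) :
    ⁅transvectionGL i k c hik, transvectionGL k j 1 hkj⁆ = transvectionGL i j c hij := by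
  ext : 1
  simp [commutatorElement_def, transvectionGL, transvection, add_mul, mul_add,
    single_mul_single_same, single_mul_single_of_ne, hik.symm, hkj.symm, hij.symm, ← single_neg]
  abel

theorem of_transvectionGL (hn : 2 < Fintype.card n) {i j : n} (hij : i ≠ j) (c : R) :
    Abelianization.of (transvectionGL i j c hij) = 1 := by
  obtain ⟨k, hk⟩ : ((Finset.univ.erase i).erase j).Nonempty := by
    rw [← Finset.card_pos, Finset.card_erase_of_mem (by simpa using hij.symm),
      Finset.card_erase_of_mem (Finset.mem_univ _), Finset.card_univ]
    omega
  simp only [Finset.mem_erase, Finset.mem_univ, and_true] at hk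
  rw [← commutatorElement_transvectionGL hij (Ne.symm hk.2) hk.1,
    Abelianization.of_commutatorElement]

end Transvection

namespace GeneralLinearGroup

variable {n : Type*} [Fintype n] [DecidableEq n]

theorem det_surjective_of_det_eq_neg_one {s : GL n ℤ} (hs : det s = -1) :
    Function.Surjective (det : GL n ℤ →* ℤˣ) := fun u => by
  rcases Int.units_eq_one_or u with rfl | rfl
  exacts [⟨1, map_one _⟩, ⟨s, hs⟩]

theorem eq_top_of_toGL_mem {H : Subgroup (GL n ℤ)}
    (hSL : ∀ A : SpecialLinearGroup n ℤ, toGL A ∈ H) {s : GL n ℤ} (hsH : s ∈ H)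
    (hs : det s = -1) : H = ⊤ := by
  have hdet : ∀ g : GL n ℤ, det g = 1 → g ∈ H := fun g hg => by
    obtain ⟨A, rfl⟩ : g ∈ Set.range toGL := by rwa [SpecialLinearGroup.range_toGL]
    exact hSL A
  refine (Subgroup.eq_top_iff' H).mpr fun g => ?_
  rcases Int.units_eq_one_or (det g) with hg | hg
  · exact hdet g hg
  · simpa using H.mul_mem hsH (hdet (s⁻¹ * g) (by rw [map_mul, map_inv, hs, hg]; rfl))

theorem bijective_lift_det (hSL : ∀ A : SpecialLinearGroup n ℤ, Abelianization.of (toGL A) = 1)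
    {s : GL n ℤ} (hs : det s = -1) :
    Function.Bijective (Abelianization.lift (det : GL n ℤ →* ℤˣ)) := by
  refine ⟨Abelianization.lift_injective_of fun g hg => ?_, fun u => ?_⟩
  · obtain ⟨A, rfl⟩ : g ∈ Set.range toGL := by rwa [SpecialLinearGroup.range_toGL]
    exact hSL A
  · obtain ⟨g, rfl⟩ := det_surjective_of_det_eq_neg_one hs u
    exact ⟨Abelianization.of g, Abelianization.lift_apply_of _ _⟩

end GeneralLinearGroup

end Matrix

theorem exists_SL2_mulVec_eq_gcd (a b : ℤ) :
    ∃ M : SL(2, ℤ), (M : Matrix (Fin 2) (Fin 2) ℤ) *ᵥ ![a, b] = ![(Int.gcd a b : ℤ), 0] := by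
  obtain hd | hd := eq_or_ne (Int.gcd a b) 0
  · obtain ⟨rfl, rfl⟩ := Int.gcd_eq_zero_iff.mp hd
    exact ⟨1, by simp⟩
  obtain ⟨a', ha⟩ := Int.gcd_dvd_left (a := a) (b := b)
  obtain ⟨b', hb⟩ := Int.gcd_dvd_right (a := a) (b := b)
  have hbez := Int.gcd_eq_gcd_ab a b
  set d : ℤ := (a.gcd b : ℤ)
  set u := a.gcdA b
  set v := a.gcdB b
  have hdet : u * a' + v * b' = 1 :=
    mul_left_cancel₀ (Int.natCast_ne_zero.mpr hd) (by linear_combination -hbez - u * ha - v * hb)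
  refine ⟨⟨!![u, v; -b', a'], by rw [Matrix.det_fin_two_of]; linear_combination hdet⟩, ?_⟩
  rw [Matrix.mulVec_fin_two]
  exact vec2_eq (show u * a + v * b = d by linear_combination -hbez)
    (show -b' * a + a' * b = 0 by linear_combination -b' * ha + a' * hb)

section GL2

def signModTwo : GL (Fin 2) ℤ →* ℤˣ :=
  Equiv.Perm.sign.comp ((MulAction.toPermHom (GL (Fin 2) (ZMod 2)) (Fin 2 → ZMod 2)).comp
    (GeneralLinearGroup.map (Int.castRingHom (ZMod 2))))

def detSignModTwo : GL (Fin 2) ℤ →* ℤˣ × ℤˣ := GeneralLinearGroup.det.prod signModTwo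

theorem detSignModTwo_s2 : detSignModTwo s2 = (-1, 1) := by decide

theorem detSignModTwo_t2 : detSignModTwo t2 = (1, -1) := by decide

theorem of_s2_mul_self : Abelianization.of s2 * Abelianization.of s2 = 1 := by
  rw [← map_mul, show s2 * s2 = 1 by decide, map_one]

theorem of_t2_mul_self : Abelianization.of t2 * Abelianization.of t2 = 1 := by
  have h := Abelianization.of_conj s2 t2
  rw [show s2 * t2 * s2⁻¹ = t2⁻¹ by decide, map_inv] at h
  exact mul_eq_one_iff_eq_inv.mpr h.symm

theorem of_toGL_S_inv : (Abelianization.of (toGL S))⁻¹ =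
    Abelianization.of t2 * Abelianization.of t2 * Abelianization.of t2 := by
  rw [← map_inv, show (toGL S)⁻¹ = t2 * (toGL S * t2 * (toGL S)⁻¹) * t2 by decide,
    map_mul, map_mul, Abelianization.of_conj]

theorem closure_of_s2_of_t2 :
    Subgroup.closure {Abelianization.of s2, Abelianization.of t2} = ⊤ := by
  set C := Subgroup.closure {Abelianization.of s2, Abelianization.of t2}
  have hs2 : Abelianization.of s2 ∈ C := Subgroup.subset_closure (by simp)
  have ht2 : Abelianization.of t2 ∈ C := Subgroup.subset_closure (by simp)
  have hSL : ∀ A : SL(2, ℤ), toGL A ∈ C.comap Abelianization.of := by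
    suffices ⊤ ≤ (C.comap Abelianization.of).comap toGL from fun A => this trivial
    rw [← SpecialLinearGroup.SL2Z_generators, Subgroup.closure_le]
    rintro _ (rfl | rfl)
    · show Abelianization.of (toGL S) ∈ C
      rw [← C.inv_mem_iff, of_toGL_S_inv]
      exact mul_mem (mul_mem ht2 ht2) ht2
    · show Abelianization.of (toGL T) ∈ C
      rwa [show toGL T = t2 by decide]
  have hC := GeneralLinearGroup.eq_top_of_toGL_mem hSL (s := s2) hs2 (by decide)
  refine eq_top_iff.mpr fun x _ => ?_
  obtain ⟨g, rfl⟩ := Abelianization.of_surjective_s6 x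
  exact (hC ▸ Subgroup.mem_top g : g ∈ C.comap Abelianization.of)

theorem bijective_lift_detSignModTwo : Function.Bijective (Abelianization.lift detSignModTwo) := by
  have hs2 := (Abelianization.lift_apply_of detSignModTwo s2).trans detSignModTwo_s2
  have ht2 := (Abelianization.lift_apply_of detSignModTwo t2).trans detSignModTwo_t2
  refine ⟨(injective_iff_map_eq_one _).mpr fun x hx => ?_, fun ⟨u, v⟩ => ?_⟩
  · rcases Subgroup.mem_closure_pair_of_mul_self_eq_one of_s2_mul_self of_t2_mul_self
      (closure_of_s2_of_t2 ▸ Subgroup.mem_top x) with rfl | rfl | rfl | rfl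
    · rfl
    all_goals simp [hs2, ht2] at hx
  · rcases Int.units_eq_one_or u with rfl | rfl <;> rcases Int.units_eq_one_or v with rfl | rfl
    · exact ⟨1, map_one _⟩
    · exact ⟨_, ht2⟩
    · exact ⟨_, hs2⟩
    · exact ⟨Abelianization.of s2 * Abelianization.of t2, by rw [map_mul, hs2, ht2]; rfl⟩

end GL2

section GL3

theorem stabMonoidHom_two_apply (M : Matrix (Fin 2) (Fin 2) ℤ) :
    stabMonoidHom 2 M = !![1, 0, 0; 0, M 0 0, M 0 1; 0, M 1 0, M 1 1] := by
  ext i j; fin_cases i <;> fin_cases j <;> rfl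

theorem stabGL_two_mulVec (g : GL (Fin 2) ℤ) (a b c : ℤ) :
    (stabGL 2 g : Matrix (Fin 3) (Fin 3) ℤ) *ᵥ ![a, b, c] =
      vecCons a ((g : Matrix (Fin 2) (Fin 2) ℤ) *ᵥ ![b, c]) := by
  rw [stabGL, Units.coe_map, stabMonoidHom_two_apply]
  ext i; fin_cases i <;> simp [Matrix.mulVec, dotProduct, Fin.sum_univ_succ]

theorem stabGL_toGL_S : stabGL 2 (toGL S) =
    (transvectionGL 1 2 (-1) * transvectionGL 2 1 1 * transvectionGL 1 2 (-1) : GL (Fin 3) ℤ) :=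
  by decide

theorem stabGL_toGL_T : stabGL 2 (toGL T) = (transvectionGL 1 2 1 : GL (Fin 3) ℤ) := by decide

theorem of_stabGL_toGL (M : SL(2, ℤ)) : Abelianization.of (stabGL 2 (toGL M)) = 1 := by
  suffices ⊤ ≤ Abelianization.of.ker.comap ((stabGL 2).comp toGL) from this trivial
  rw [← SpecialLinearGroup.SL2Z_generators, Subgroup.closure_le]
  have h3 : 2 < Fintype.card (Fin 3) := by simp
  rintro _ (rfl | rfl) <;>
    simp only [SetLike.mem_coe, Subgroup.mem_comap, MonoidHom.comp_apply, MonoidHom.mem_ker,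
      stabGL_toGL_S, stabGL_toGL_T, map_mul, of_transvectionGL h3, mul_one]

def rotate3 : GL (Fin 3) ℤ :=
  ⟨!![0, 1, 0; 0, 0, 1; 1, 0, 0], !![0, 0, 1; 1, 0, 0; 0, 1, 0], by decide, by decide⟩

theorem rotate3_mulVec (a b c : ℤ) :
    (rotate3 : Matrix (Fin 3) (Fin 3) ℤ) *ᵥ ![a, b, c] = ![b, c, a] := by
  ext i; fin_cases i <;> simp [rotate3, Matrix.mulVec, dotProduct, Fin.sum_univ_succ]

theorem rotate3_inv_mulVec (a b c : ℤ) :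
    ((rotate3⁻¹ : GL (Fin 3) ℤ) : Matrix (Fin 3) (Fin 3) ℤ) *ᵥ ![a, b, c] = ![c, a, b] := by
  ext i; fin_cases i <;> simp [rotate3, Matrix.mulVec, dotProduct, Fin.sum_univ_succ]

theorem exists_of_eq_one_mulVec_eq (v : Fin 3 → ℤ) :
    ∃ k : GL (Fin 3) ℤ, Abelianization.of k = 1 ∧ ∃ e : ℕ,
      (k : Matrix (Fin 3) (Fin 3) ℤ) *ᵥ v = ![(e : ℤ), 0, 0] := by
  obtain ⟨M, hM⟩ := exists_SL2_mulVec_eq_gcd (v 1) (v 2)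
  obtain ⟨N, hN⟩ := exists_SL2_mulVec_eq_gcd (v 0) (Int.gcd (v 1) (v 2))
  refine ⟨rotate3 * stabGL 2 (toGL N) * rotate3⁻¹ * stabGL 2 (toGL M), ?_,
    Int.gcd (v 0) (Int.gcd (v 1) (v 2)), ?_⟩
  · simp [Abelianization.of_conj, of_stabGL_toGL]
  have hv : v = ![v 0, v 1, v 2] := by ext i; fin_cases i <;> rfl
  conv_lhs => rw [hv]
  simp only [Units.val_mul, ← mulVec_mulVec]
  rw [stabGL_two_mulVec, coe_GL_coe_matrix, hM, rotate3_inv_mulVec, stabGL_two_mulVec,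
    coe_GL_coe_matrix, hN]
  exact rotate3_mulVec _ _ _

theorem eq_stabMonoidHom_two_mul_transvection (g : Matrix (Fin 3) (Fin 3) ℤ) (h0 : g 0 0 = 1)
    (h1 : g 1 0 = 0) (h2 : g 2 0 = 0) :
    g = stabMonoidHom 2 !![g 1 1, g 1 2; g 2 1, g 2 2] *
      (transvection 0 1 (g 0 1) * transvection 0 2 (g 0 2)) := by
  rw [stabMonoidHom_two_apply]
  ext i j; fin_cases i <;> fin_cases j <;>
    simp [transvection, single_apply, one_apply, Matrix.mul_apply, Fin.sum_univ_succ, h0, h1, h2]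

theorem of_toGL_eq_one_fin_three (A : SL(3, ℤ)) : Abelianization.of (toGL A) = 1 := by
  obtain ⟨k, hk, e, he⟩ := exists_of_eq_one_mulVec_eq (fun i => A i 0)
  set g : GL (Fin 3) ℤ := k * toGL A with hg
  have h0 : (g : Matrix (Fin 3) (Fin 3) ℤ) 0 0 = e := congrFun he 0
  have h1 : (g : Matrix (Fin 3) (Fin 3) ℤ) 1 0 = 0 := congrFun he 1
  have h2 : (g : Matrix (Fin 3) (Fin 3) ℤ) 2 0 = 0 := congrFun he 2
  have hdet : (g : Matrix (Fin 3) (Fin 3) ℤ).det = 1 := by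
    have hk' : GeneralLinearGroup.det k = 1 := by
      rw [← Abelianization.lift_apply_of, hk, map_one]
    simp [g, ← GeneralLinearGroup.val_det_apply, hk']
  set B : Matrix (Fin 2) (Fin 2) ℤ := !![g 1 1, g 1 2; g 2 1, g 2 2]
  have hdetB : (e : ℤ) * B.det = 1 := by
    rw [← hdet, det_fin_three, det_fin_two_of, h0, h1, h2]
    ring
  have he1 : (e : ℤ) = 1 := Int.eq_one_of_mul_eq_one_right (Int.natCast_nonneg e) hdetB
  rw [he1, one_mul] at hdetB
  have hdecomp : g = stabGL 2 (toGL (⟨B, hdetB⟩ : SL(2, ℤ))) *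
      (transvectionGL 0 1 (g 0 1) * transvectionGL 0 2 (g 0 2)) :=
    Units.ext (eq_stabMonoidHom_two_mul_transvection _ (h0.trans he1) h1 h2)
  have h3 : 2 < Fintype.card (Fin 3) := by simp
  have hg1 : Abelianization.of g = 1 := by
    rw [hdecomp, map_mul, map_mul, of_transvectionGL h3, of_transvectionGL h3, mul_one, mul_one]
    exact of_stabGL_toGL _
  rwa [hg, map_mul, hk, one_mul] at hg1

end GL3

/-- `GL_1(ℤ)_ab ≅ ℤ/2` generated by `(-1)`; `GL_2(ℤ)_ab ≅ (ℤ/2)²` generated by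
`diag(-1,1)` and `[[1,1],[0,1]]`; `GL_3(ℤ)_ab ≅ ℤ/2` generated by `diag(-1,1,1)`; and under
the stabilisation map (block sum with a `1×1` identity) `diag(-1,1) ↦ diag(-1,1,1)` and
`[[1,1],[0,1]] ↦ 0` in `GL_3(ℤ)_ab`. -/
theorem stmt_6 :
    (Nat.card (Abelianization (GL (Fin 1) ℤ)) = 2 ∧
      Abelianization.of s1 ≠ 1 ∧ ∀ x : Abelianization (GL (Fin 1) ℤ), x * x = 1) ∧
    (Nat.card (Abelianization (GL (Fin 2) ℤ)) = 4 ∧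
      (∀ x : Abelianization (GL (Fin 2) ℤ), x * x = 1) ∧
      Subgroup.closure {Abelianization.of s2, Abelianization.of t2} = ⊤ ∧
      Abelianization.of s2 ≠ Abelianization.of t2 ∧
      Abelianization.of s2 ≠ 1 ∧ Abelianization.of t2 ≠ 1) ∧
    (Nat.card (Abelianization (GL (Fin 3) ℤ)) = 2 ∧
      Abelianization.of s3 ≠ 1 ∧ ∀ x : Abelianization (GL (Fin 3) ℤ), x * x = 1) ∧
    (Abelianization.map (stabGL 2) (Abelianization.of s2) = Abelianization.of s3 ∧
      Abelianization.map (stabGL 2) (Abelianization.of t2) = 1) := by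
  have h1 := GeneralLinearGroup.bijective_lift_det (s := s1)
    (fun A => by rw [Subsingleton.elim A 1, map_one, map_one]) (by decide)
  have h2 := bijective_lift_detSignModTwo
  have h3 := GeneralLinearGroup.bijective_lift_det (s := s3) of_toGL_eq_one_fin_three (by decide)
  have hsq : ∀ u : ℤˣ × ℤˣ, u * u = 1 := fun u =>
    Prod.ext (Int.units_mul_self _) (Int.units_mul_self _)
  refine ⟨⟨?_, ?_, mul_self_eq_one_of_injective h1.1 Int.units_mul_self⟩,
    ⟨?_, mul_self_eq_one_of_injective h2.1 hsq, closure_of_s2_of_t2, fun h => ?_, ?_, ?_⟩,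
    ⟨?_, ?_, mul_self_eq_one_of_injective h3.1 Int.units_mul_self⟩, ?_, ?_⟩
  · rw [Nat.card_eq_of_bijective _ h1, Nat.card_eq_fintype_card, Fintype.card_units_int]
  · exact Abelianization.of_ne_one_of_map_ne_one GeneralLinearGroup.det (by decide)
  · rw [Nat.card_eq_of_bijective _ h2, Nat.card_prod, Nat.card_eq_fintype_card,
      Fintype.card_units_int]
  · simpa [detSignModTwo_s2, detSignModTwo_t2] using congrArg (Abelianization.lift detSignModTwo) h
  · exact Abelianization.of_ne_one_of_map_ne_one detSignModTwo (by rw [detSignModTwo_s2]; decide)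
  · exact Abelianization.of_ne_one_of_map_ne_one detSignModTwo (by rw [detSignModTwo_t2]; decide)
  · rw [Nat.card_eq_of_bijective _ h3, Nat.card_eq_fintype_card, Fintype.card_units_int]
  · exact Abelianization.of_ne_one_of_map_ne_one GeneralLinearGroup.det (by decide)
  · exact h3.1 (by simp only [Abelianization.map_of, Abelianization.lift_apply_of]; decide)
  · exact h3.1 (by rw [Abelianization.map_of, Abelianization.lift_apply_of, map_one]; decide)
end

section
/- Let (G_p) be a family of groups with multiplication satisfying the intersection axiom. For any n ≥ 2 and 1 ≤ q_0,...,q_{r+1} with q_0+...+q_{r+1} = n, the intersection over i = 0,...,r of the subgroups G_{q_0+...+q_i} × G_{q_{i+1}+...+q_{r+1}} of G_n equals G_{q_0} × G_{q_1} × ... × G_{q_{r+1}}. -/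
universe u

/-- A family of groups with multiplication (see Definition 2.1 of the paper). -/
structure GroupFamily where
  G : ℕ → Type u
  [grp : ∀ p, Group (G p)]
  mul : ∀ {p q : ℕ}, G p → G q → G (p + q)
  unit : Subsingleton (G 0)
  mul_one : ∀ {p : ℕ} (g : G p), mul g (1 : G 0) = g
  one_mul : ∀ {p : ℕ} (g : G p), HEq (mul (1 : G 0) g) g
  assoc : ∀ {p q r : ℕ} (g : G p) (h : G q) (k : G r),
    HEq (mul (mul g h) k) (mul g (mul h k))
  comm : ∀ (p q : ℕ), ∃ τ : G (p + q), ∀ (g : G p) (h : G q),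
    HEq (τ * mul g h * τ⁻¹) (mul h g)
  inj : ∀ (p q : ℕ), Function.Injective (fun gh : G p × G q => mul gh.1 gh.2)
  /-- The intersection axiom. -/
  inter : ∀ (p q r : ℕ) (x : G (p + q + r)),
    ((∃ (a : G (p + q)) (b : G r), x = mul a b) ∧
      (∃ (c : G p) (d : G (q + r)),
        x = cast (congrArg G (Nat.add_assoc p q r)).symm (mul c d))) ↔
    ∃ (a : G p) (b : G q) (c : G r), x = mul (mul a b) c

attribute [instance] GroupFamily.grp

/-- The subgroup (as a subset) `G a × G b ⊆ G n`, for `a + b = n`. -/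
def GroupFamily.splitSet (F : GroupFamily) (n a b : ℕ) : Set (F.G n) :=
  {x | ∃ (g : F.G a) (h : F.G b) (e : a + b = n), x = cast (congrArg F.G e) (F.mul g h)}

/-- The iterated product subgroup (as a subset)
`G q₀ × G q₁ × ⋯ × G q_r ⊆ G (q₀ + ⋯ + q_r)` for a list `l = [q₀, ..., q_r]`. -/
def GroupFamily.iterMulSet (F : GroupFamily) : (l : List ℕ) → Set (F.G l.sum)
  | [] => {1}
  | q :: l => {x | ∃ (a : F.G q) (y : F.G l.sum) (e : q + l.sum = (q :: l).sum),
      y ∈ F.iterMulSet l ∧ x = cast (congrArg F.G e) (F.mul a y)}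

/-!
Induction on the list `q₀ :: l`. The first split writes `x = a * y` with `a ∈ G q₀` and
`y ∈ G (∑ l)`.
For every later split `x ∈ G (q₀ + t) × G u`, the intersection axiom places `x` in
`G q₀ × G t × G u`, and injectivity of the product then puts `y` in `G t × G u`; so `y`
satisfies the hypothesis for `l`. The converse inclusion is associativity.
-/

namespace GroupFamily

variable (F : GroupFamily.{u})

instance : Subsingleton (F.G 0) := F.unit

variable {F}

lemma mul_eq_mul_iff {p q : ℕ} {a a' : F.G p} {b b' : F.G q} :
    F.mul a b = F.mul a' b' ↔ a = a' ∧ b = b' :=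
  ⟨fun h => Prod.ext_iff.1 (@F.inj p q (a, b) (a', b') h), by rintro ⟨rfl, rfl⟩; rfl⟩

lemma mul_heq_mul_of_heq_right {p q q' : ℕ} (a : F.G p) {b : F.G q} {b' : F.G q'}
    (hq : q = q') (hb : HEq b b') : HEq (F.mul a b) (F.mul a b') := by
  subst hq
  rw [eq_of_heq hb]

lemma mem_splitSet_iff {n a b : ℕ} {x : F.G n} :
    x ∈ F.splitSet n a b ↔ a + b = n ∧ ∃ (g : F.G a) (h : F.G b), HEq x (F.mul g h) := by
  constructor
  · rintro ⟨g, h, e, rfl⟩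
    exact ⟨e, g, h, cast_heq _ _⟩
  · rintro ⟨rfl, g, h, hx⟩
    exact ⟨g, h, rfl, eq_of_heq hx⟩

lemma mem_iterMulSet_cons_iff {q : ℕ} {l : List ℕ} {x : F.G (q :: l).sum} :
    x ∈ F.iterMulSet (q :: l) ↔ ∃ (a : F.G q), ∃ y ∈ F.iterMulSet l, x = F.mul a y :=
  ⟨fun ⟨a, y, _, hy, hx⟩ => ⟨a, y, hy, hx⟩,
    fun ⟨a, y, hy, hx⟩ => ⟨a, y, rfl, hy, hx⟩⟩

lemma mem_splitSet_of_mem_iterMulSet {l : List ℕ} {x : F.G l.sum} (hx : x ∈ F.iterMulSet l)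
    (k : ℕ) : x ∈ F.splitSet l.sum (l.take k).sum (l.drop k).sum := by
  induction l generalizing k with
  | nil =>
    cases k <;>
      exact F.mem_splitSet_iff.2 ⟨rfl, 1, 1, heq_of_eq (Subsingleton.elim (α := F.G 0) _ _)⟩
  | cons q l ih =>
    obtain ⟨a, y, hy, rfl⟩ := mem_iterMulSet_cons_iff.1 hx
    cases k with
    | zero => exact F.mem_splitSet_iff.2 ⟨Nat.zero_add _, 1, _, (F.one_mul _).symm⟩
    | succ k =>
      obtain ⟨e, b, c, hbc⟩ := F.mem_splitSet_iff.1 (ih hy k)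
      exact F.mem_splitSet_iff.2 ⟨List.sum_take_add_sum_drop _ _, F.mul a b, c,
        (mul_heq_mul_of_heq_right a e.symm hbc).trans (F.assoc a b c).symm⟩

lemma mem_splitSet_of_mul_mem_splitSet {q s t u : ℕ} {a : F.G q} {y : F.G s}
    (h : F.mul a y ∈ F.splitSet (q + s) (q + t) u) : y ∈ F.splitSet s t u := by
  obtain ⟨e, c, d, hcd⟩ := F.mem_splitSet_iff.1 h
  obtain rfl : t + u = s := by omega
  obtain ⟨a', b', c', habc⟩ := (F.inter q t u (F.mul c d)).1
    ⟨⟨c, d, rfl⟩, ⟨a, y, eq_of_heq (hcd.symm.trans (cast_heq _ _).symm)⟩⟩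
  have hmul : F.mul a y = F.mul a' (F.mul b' c') :=
    eq_of_heq (hcd.trans ((heq_of_eq habc).trans (F.assoc a' b' c')))
  exact F.mem_splitSet_iff.2 ⟨rfl, b', c', heq_of_eq (mul_eq_mul_iff.1 hmul).2⟩

theorem forall_mem_splitSet_iff_mem_iterMulSet (l : List ℕ) (x : F.G l.sum) :
    (∀ k, 1 ≤ k → k < l.length → x ∈ F.splitSet l.sum (l.take k).sum (l.drop k).sum) ↔
      x ∈ F.iterMulSet l := by
  refine ⟨fun H => ?_, fun hx k _ _ => mem_splitSet_of_mem_iterMulSet hx k⟩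
  induction l with
  | nil => exact Subsingleton.elim (α := F.G 0) x 1
  | cons q l ih =>
    obtain rfl | hl := eq_or_ne l []
    · exact ⟨x, 1, rfl, rfl, (F.mul_one x).symm⟩
    have hfirst : x ∈ F.splitSet (q + l.sum) q l.sum :=
      H 1 le_rfl (by simpa [List.length_pos_iff] using hl)
    obtain ⟨-, a, y, hxy⟩ := F.mem_splitSet_iff.1 hfirst
    obtain rfl := eq_of_heq hxy
    refine mem_iterMulSet_cons_iff.2 ⟨a, y, ih y fun k _ hkl => ?_, rfl⟩
    exact mem_splitSet_of_mul_mem_splitSet (H (k + 1) (by omega) (by simpa using hkl))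

end GroupFamily

theorem stmt_15_general (F : GroupFamily.{u}) (n : ℕ) (l : List ℕ)
    (hsum : l.sum = n) (x : F.G n) :
    (∀ k, 1 ≤ k → k < l.length →
        x ∈ F.splitSet n ((l.take k).sum) ((l.drop k).sum)) ↔
      ∃ y ∈ F.iterMulSet l, x = cast (congrArg F.G hsum) y := by
  subst hsum
  rw [F.forall_mem_splitSet_iff_mem_iterMulSet l x]
  exact ⟨fun hx => ⟨x, hx, rfl⟩, fun ⟨y, hy, hxy⟩ => hxy ▸ hy⟩

/-- for `q₀, ..., q_{r+1} ≥ 1` with `q₀ + ⋯ + q_{r+1} = n`, the intersection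
over `i = 0, ..., r` of the subgroups `G (q₀+⋯+q_i) × G (q_{i+1}+⋯+q_{r+1})` of `G n`
equals `G q₀ × G q₁ × ⋯ × G q_{r+1}`. -/
theorem stmt_15 (F : GroupFamily.{u}) (n : ℕ) (hn : 2 ≤ n) (l : List ℕ)
    (hlen : 2 ≤ l.length) (hpos : ∀ q ∈ l, 1 ≤ q) (hsum : l.sum = n) (x : F.G n) :
    (∀ k, 1 ≤ k → k < l.length →
        x ∈ F.splitSet n ((l.take k).sum) ((l.drop k).sum)) ↔
      ∃ y ∈ F.iterMulSet l, x = cast (congrArg F.G hsum) y :=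
  stmt_15_general F n l hsum x
end
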